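/- Let G be a finitely generated group with finitely generated subgroups H and K, let X be a nontrivial H-almost invariant subset of G and let Y be a nontrivial K-almost invariant subset of G. Then the set {g ∈ G : gX and Y are not nested} is contained in finitely many double cosets KgH; that is, there is a finite subset F of G such that every g ∈ G for which gX and Y are not nested can be written g = k·f·h with k ∈ K, f ∈ F and h ∈ H. -/

import Mathlib

section Defs

variable {G : Type*} [Group G]

/-- `W` is `H`-finite: contained in finitely many left cosets `Hg` of `H` in `G`. -/
def HFinite (H : Subgroup G) (W : Set G) : Prop :=
  ∃ F : Finset G, W ⊆ ⋃ g ∈ F, (· * g) '' (H : Set G)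

/-- The left translate `gX` of a subset `X` of `G`. -/
def leftTr (g : G) (X : Set G) : Set G := (g * ·) '' X

/-- `X` is an `H`-almost invariant subset of `G`: `HX = X` and for every `g` the
symmetric difference of `X` and `Xg` is `H`-finite. -/
def AlmostInv (H : Subgroup G) (X : Set G) : Prop :=
  (∀ h ∈ H, leftTr h X = X) ∧ ∀ g : G, HFinite H (symmDiff X ((· * g) '' X))

/-- `X` is a nontrivial `H`-almost invariant subset of `G`. -/
def NontrivialAI (H : Subgroup G) (X : Set G) : Prop :=
  AlmostInv H X ∧ ¬ HFinite H X ∧ ¬ HFinite H Xᶜ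

/-- `Y` crosses the `H`-almost invariant set `X`: none of the four corner sets is `H`-finite. -/
def Crosses (H : Subgroup G) (X Y : Set G) : Prop :=
  ¬ HFinite H (X ∩ Y) ∧ ¬ HFinite H (X ∩ Yᶜ) ∧ ¬ HFinite H (Xᶜ ∩ Y) ∧ ¬ HFinite H (Xᶜ ∩ Yᶜ)

/-- The coboundary `∂Y` of `Y` with respect to a finite generating set `S`. -/
def bdry (S : Finset G) (Y : Set G) : Set G :=
  {g : G | ∃ s ∈ (S : Set G) ∪ (S : Set G)⁻¹, (g ∈ Y) ≠ (g * s ∈ Y)}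

/-- `Y` crosses the `H`-almost invariant set `X` strongly: neither `∂Y ∩ X` nor
`∂Y ∩ X*` is `H`-finite. -/
def CrossesStrongly (S : Finset G) (H : Subgroup G) (X Y : Set G) : Prop :=
  ¬ HFinite H (bdry S Y ∩ X) ∧ ¬ HFinite H (bdry S Y ∩ Xᶜ)

/-- Two subsets of `G` are nested if one of the four corner sets is empty. -/
def Nested (U V : Set G) : Prop :=
  U ∩ V = ∅ ∨ U ∩ Vᶜ = ∅ ∨ Uᶜ ∩ V = ∅ ∨ Uᶜ ∩ Vᶜ = ∅

/-- The conjugate subgroup `gHg⁻¹`. -/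
def conjSub (g : G) (H : Subgroup G) : Subgroup G :=
  Subgroup.map (MulAut.conj g).toMonoidHom H

/-- A subgroup is two-ended if it contains an infinite cyclic subgroup of finite index. -/
def TwoEnded (H : Subgroup G) : Prop :=
  ∃ z : G, z ∈ H ∧ ¬ IsOfFinOrder z ∧ (Subgroup.zpowers z).relIndex H ≠ 0

/-- `G` is one-ended: `G` is infinite and every almost invariant subset of `G` (over the
trivial group) is finite or cofinite. -/
def OneEnded (G : Type*) [Group G] : Prop :=
  Infinite G ∧ ∀ X : Set G,
    (∀ g : G, (symmDiff X ((· * g) '' X)).Finite) → X.Finite ∨ Xᶜ.Finite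

/-- `G` is finitely presented. -/
def FinitelyPresentedGroup (G : Type*) [Group G] : Prop :=
  ∃ (n : ℕ) (R : Finset (FreeGroup (Fin n))),
    Nonempty (G ≃* FreeGroup (Fin n) ⧸ Subgroup.normalClosure (R : Set (FreeGroup (Fin n))))

/-- `Q(H)`: the collection of subsets of `G` which are almost invariant over some subgroup
commensurable with `H`. -/
def QH (H : Subgroup G) : Set (Set G) :=
  {X : Set G | ∃ K : Subgroup G, Subgroup.Commensurable K H ∧ AlmostInv K X}

/-- The Boolean algebra of subsets of `G` generated by a family `S` of subsets: the smallest
family containing `S` closed under complementation, finite intersections and finite unions. -/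
inductive BoolGen (S : Set (Set G)) : Set G → Prop
  | basic {U : Set G} : U ∈ S → BoolGen S U
  | compl {U : Set G} : BoolGen S U → BoolGen S Uᶜ
  | inter {U V : Set G} : BoolGen S U → BoolGen S V → BoolGen S (U ∩ V)
  | union {U V : Set G} : BoolGen S U → BoolGen S V → BoolGen S (U ∪ V)

/-- A subgroup is virtually free abelian of rank `m` if it has a finite index subgroup
isomorphic to `ℤ^m`. -/
def VirtuallyFreeAbelian (H : Subgroup G) (m : ℕ) : Prop :=
  ∃ K : Subgroup G, K ≤ H ∧ K.relIndex H ≠ 0 ∧ Nonempty (K ≃* Multiplicative (Fin m → ℤ))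

/-- `X` is `n`-canonical with respect to abelian groups: no translate of `X` crosses a
nontrivial almost invariant set over a virtually free abelian subgroup of rank at most `n`. -/
def NCanonicalAb (n : ℕ) (X : Set G) : Prop :=
  ∀ (L : Subgroup G) (m : ℕ), m ≤ n → VirtuallyFreeAbelian L m →
    ∀ Z : Set G, AlmostInv L Z → ¬ HFinite L Z → ¬ HFinite L Zᶜ →
      ∀ g : G, ¬ Crosses L Z (leftTr g X)

variable {ι : Type*}

/-- The set `E` of all translates of the sets `X i` and of their complements. -/
def Translates (X : ι → Set G) : Set (Set G) :=
  {U : Set G | ∃ (g : G) (i : ι), U = leftTr g (X i) ∨ U = (leftTr g (X i))ᶜ}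

/-- `W` is small for the element `U` of `E`: `W` is finite over the group `gHᵢg⁻¹`
associated to `U`. -/
def SmallOver (H : ι → Subgroup G) (X : ι → Set G) (U W : Set G) : Prop :=
  ∃ (g : G) (i : ι), (U = leftTr g (X i) ∨ U = (leftTr g (X i))ᶜ) ∧
    HFinite (conjSub g (H i)) W

/-- The four corner sets `U^{(*)} ∩ V^{(*)}`, indexed by pairs of booleans. -/
def corner (U V : Set G) (p : Bool × Bool) : Set G :=
  (cond p.1 U Uᶜ) ∩ (cond p.2 V Vᶜ)

/-- Condition (*): the family is in good position: whenever two of the four corner sets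
of a pair of elements of `E` are small, one of the corner sets is empty. -/
def GoodPosition (H : ι → Subgroup G) (X : ι → Set G) : Prop :=
  ∀ U ∈ Translates X, ∀ V ∈ Translates X,
    ∀ p q : Bool × Bool, p ≠ q →
      SmallOver H X U (corner U V p) → SmallOver H X U (corner U V q) →
        ∃ r : Bool × Bool, corner U V r = ∅

/-- The relation `U ≤ V` on `E`: `U ∩ V*` is empty or is the only small corner set. -/
def eLE (H : ι → Subgroup G) (X : ι → Set G) (U V : Set G) : Prop :=
  U ∩ Vᶜ = ∅ ∨
    (SmallOver H X U (U ∩ Vᶜ) ∧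
      ∀ p : Bool × Bool, p ≠ (true, false) → ¬ SmallOver H X U (corner U V p))

/-- The relation `U < V` on `E`. -/
def eLT (H : ι → Subgroup G) (X : ι → Set G) (U V : Set G) : Prop :=
  eLE H X U V ∧ U ≠ V

/-- `V` crosses the element `U` of `E`: no corner set is small. -/
def CrossesE (H : ι → Subgroup G) (X : ι → Set G) (U V : Set G) : Prop :=
  ∀ p : Bool × Bool, ¬ SmallOver H X U (corner U V p)

/-- `V` crosses the element `U` of `E` strongly. -/
def StronglyCrossesE (S : Finset G) (H : ι → Subgroup G) (X : ι → Set G) (U V : Set G) : Prop :=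
  ∃ (g : G) (i : ι), (U = leftTr g (X i) ∨ U = (leftTr g (X i))ᶜ) ∧
    ¬ HFinite (conjSub g (H i)) (bdry S V ∩ U) ∧ ¬ HFinite (conjSub g (H i)) (bdry S V ∩ Uᶜ)

/-- The relation on `E` generating the cross-connected components of `Ē`: two elements are
related if they coincide, are complementary, or cross. -/
def ccRelSet (H : ι → Subgroup G) (X : ι → Set G) (U V : Set G) : Prop :=
  U ∈ Translates X ∧ V ∈ Translates X ∧ (U = V ∨ U = Vᶜ ∨ CrossesE H X U V)

/-- `U` and `V` determine the same cross-connected component of `Ē`. -/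
def SameCCC (H : ι → Subgroup G) (X : ι → Set G) (U V : Set G) : Prop :=
  Relation.EqvGen (ccRelSet H X) U V

/-- `V̄` lies between `Ū` and `W̄` in `Ē`: some representatives satisfy `u < v < w`. -/
def BetweenBar (H : ι → Subgroup G) (X : ι → Set G) (U V W : Set G) : Prop :=
  ∃ u v w : Set G, (u = U ∨ u = Uᶜ) ∧ (v = V ∨ v = Vᶜ) ∧ (w = W ∨ w = Wᶜ) ∧
    eLT H X u v ∧ eLT H X v w

/-- The setoid on `E` whose classes are the cross-connected components of `Ē`. -/
def cccSetoid (H : ι → Subgroup G) (X : ι → Set G) :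
    Setoid {U : Set G // U ∈ Translates X} where
  r u v := SameCCC H X u.1 v.1
  iseqv := by
    refine ⟨fun u => Relation.EqvGen.refl _, ?_, ?_⟩
    · exact fun h => Relation.EqvGen.symm _ _ h
    · exact fun h₁ h₂ => Relation.EqvGen.trans _ _ _ h₁ h₂

theorem leftTr_leftTr (g g' : G) (X : Set G) : leftTr g (leftTr g' X) = leftTr (g * g') X := by
  simp only [leftTr, Set.image_image, mul_assoc]

theorem leftTr_compl (g : G) (X : Set G) : leftTr g Xᶜ = (leftTr g X)ᶜ :=
  Set.image_compl_eq (Group.mulLeft_bijective g)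

/-- Left translation as a map from `E` to `E`. -/
def translateE (X : ι → Set G) (g : G) (u : {U : Set G // U ∈ Translates X}) :
    {U : Set G // U ∈ Translates X} :=
  ⟨leftTr g u.1, by
    obtain ⟨g', i, h | h⟩ := u.2
    · exact ⟨g * g', i, Or.inl (by rw [h, leftTr_leftTr])⟩
    · exact ⟨g * g', i, Or.inr (by rw [h, leftTr_compl, leftTr_leftTr])⟩⟩

/-- Betweenness for cross-connected components: `B` lies between the distinct components
`A` and `C` if there are elements enclosed by them with `u < v < w`. -/
def BetweenCCC (H : ι → Subgroup G) (X : ι → Set G)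
    (A B C : Quotient (cccSetoid H X)) : Prop :=
  A ≠ B ∧ B ≠ C ∧ A ≠ C ∧
    ∃ u v w : {U : Set G // U ∈ Translates X},
      Quotient.mk (cccSetoid H X) u = A ∧ Quotient.mk (cccSetoid H X) v = B ∧
        Quotient.mk (cccSetoid H X) w = C ∧
        eLT H X u.1 v.1 ∧ eLT H X v.1 w.1

/-- The half-tree `Y_s` determined by the oriented edge `s = (u,v)`: the vertices
reachable from the terminal vertex `v` after deleting the edge `{u,v}`. -/
def halfTree {V : Type*} (T : SimpleGraph V) (u v : V) : Set V :=
  {w : V | (T.deleteEdges {s(u, v)}).Reachable v w}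

/-- With respect to a base vertex `b`, the subset `Z_s` of `G` determined by the
oriented edge `s = (u,v)`. -/
def Zset {V : Type*} [MulAction G V] (T : SimpleGraph V) (b u v : V) : Set G :=
  {g : G | g • b ∈ halfTree T u v}

/-- The vertex `v` encloses the `H`-almost invariant set `A`: for every edge `s`
oriented towards `v`, either `A ∩ Z_s*` or `A* ∩ Z_s*` is `H`-finite. -/
def Encloses {V : Type*} [MulAction G V] (T : SimpleGraph V) (b : V) (H : Subgroup G)
    (v : V) (A : Set G) : Prop :=
  ∀ u : V, T.Adj u v → HFinite H (A ∩ (Zset T b u v)ᶜ) ∨ HFinite H (Aᶜ ∩ (Zset T b u v)ᶜ)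

end Defs

/-!
Fix a finite generating set `S` of `G`; the coboundary `∂Z` consists of the `z` such that `z` and
`zs` lie on different sides of `Z` for some `s ∈ S ∪ S⁻¹`. Almost invariance gives finite sets
with `∂X ⊆ HD` and `∂Y ⊆ KE`. If `gX` and `Y` are not nested, then either `∂Y` meets both `gX` and
`gX*`, or `∂(gX) = g∂X` meets both `Y` and `Y*`: a path leaving a nonempty corner crosses one of
the two coboundaries, and cannot cross the one lying on the other side of it. In the first case,
walk inside `KE` along generators of `K` between the two points of `∂Y`; some step, a right
multiplication by an element of the finite set `E⁻¹(T ∪ T⁻¹ ∪ {1})E`, leaves `gX`, so a point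
`keβ` with `β` in a fixed finite set lies in `∂(gX) ⊆ gHD`, whence `g ∈ K(EβD⁻¹)H`. The second
case is symmetric.
-/

open scoped Pointwise

section

variable {G : Type*} [Group G]

lemma hFinite_iff_subset_mul {H : Subgroup G} {W : Set G} :
    HFinite H W ↔ ∃ F : Finset G, W ⊆ (H : Set G) * F := by
  simp only [HFinite, ← Set.iUnion_mul_right_image, Finset.mem_coe]

lemma HFinite.biUnion {H : Subgroup G} {ι : Type*} (T : Finset ι) {W : ι → Set G}
    (hW : ∀ i ∈ T, HFinite H (W i)) : HFinite H (⋃ i ∈ T, W i) := by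
  classical
  choose! F hF using fun i hi => hFinite_iff_subset_mul.mp (hW i hi)
  refine hFinite_iff_subset_mul.mpr ⟨T.biUnion F, Set.iUnion₂_subset fun i hi => ?_⟩
  exact (hF i hi).trans
    (Set.mul_subset_mul_left (by exact_mod_cast Finset.subset_biUnion_of_mem F hi))

lemma mem_leftTr {g a : G} {X : Set G} : a ∈ leftTr g X ↔ g⁻¹ * a ∈ X := by
  simp [leftTr, Set.image_mul_left]

lemma bdry_leftTr (S : Finset G) (g : G) (X : Set G) :
    bdry S (leftTr g X) = leftTr g (bdry S X) := by
  ext a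
  simp only [bdry, Set.mem_ofPred_eq, mem_leftTr, mul_assoc]

lemma bdry_compl (S : Finset G) (Z : Set G) : bdry S Zᶜ = bdry S Z := by
  ext a
  simp [bdry, not_iff_not]

lemma bdry_subset_biUnion_symmDiff [DecidableEq G] (S : Finset G) (X : Set G) :
    bdry S X ⊆ ⋃ s ∈ S ∪ S⁻¹, symmDiff X ((· * s⁻¹) '' X) := by
  rintro a ⟨s, hs, hne⟩
  refine Set.mem_iUnion₂.mpr ⟨s, by simpa [← Finset.coe_inv] using hs, ?_⟩
  simp only [Set.image_mul_right, inv_inv, Set.mem_symmDiff, Set.mem_preimage]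
  tauto

lemma AlmostInv.hFinite_bdry (S : Finset G) {H : Subgroup G} {X : Set G} (hX : AlmostInv H X) :
    HFinite H (bdry S X) := by
  classical
  obtain ⟨F, hF⟩ := HFinite.biUnion (S ∪ S⁻¹) fun s _ => hX.2 s⁻¹
  exact ⟨F, (bdry_subset_biUnion_symmDiff S X).trans hF⟩

variable {S : Finset G}

lemma exists_finset_mem_inter_bdry (hS : Subgroup.closure (S : Set G) = ⊤) (r : G) :
    ∃ B : Finset G, ∀ (Z : Set G) (x : G), x ∈ Z → x * r ∉ Z →
      ∃ β ∈ B, x * β ∈ Z ∩ bdry S Z := by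
  classical
  have hr : r ∈ Subgroup.closure (S : Set G) := hS ▸ Subgroup.mem_top r
  induction hr using Subgroup.closure_induction'' with
  | mem s hs =>
    exact ⟨{1}, fun Z x hx hxs =>
      ⟨1, Finset.mem_singleton_self 1, by simpa using hx, s, Or.inl hs, by simp [hx, hxs]⟩⟩
  | inv_mem s hs =>
    exact ⟨{1}, fun Z x hx hxs =>
      ⟨1, Finset.mem_singleton_self 1, by simpa using hx, s⁻¹, Or.inr (by simpa using hs),
        by simp [hx, hxs]⟩⟩
  | one => exact ⟨∅, fun Z x hx hx' => (hx' (by simpa using hx)).elim⟩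
  | mul r₁ r₂ _ _ ih₁ ih₂ =>
    obtain ⟨B₁, hB₁⟩ := ih₁
    obtain ⟨B₂, hB₂⟩ := ih₂
    refine ⟨B₁ ∪ r₁ • B₂, fun Z x hx hxr => ?_⟩
    by_cases hx₁ : x * r₁ ∈ Z
    · obtain ⟨β, hβ, hxβ⟩ := hB₂ Z (x * r₁) hx₁ (by rwa [mul_assoc])
      exact ⟨r₁ * β, Finset.mem_union_right _ (Finset.smul_mem_smul_finset hβ),
        by rwa [← mul_assoc]⟩
    · obtain ⟨β, hβ, hxβ⟩ := hB₁ Z x hx hx₁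
      exact ⟨β, Finset.mem_union_left _ hβ, hxβ⟩

lemma exists_finset_forall_mem_inter_bdry (hS : Subgroup.closure (S : Set G) = ⊤)
    (Q : Finset G) : ∃ B : Finset G, ∀ r ∈ Q, ∀ (Z : Set G) (x : G), x ∈ Z → x * r ∉ Z →
      ∃ β ∈ B, x * β ∈ Z ∩ bdry S Z := by
  classical
  choose B hB using exists_finset_mem_inter_bdry hS
  refine ⟨Q.biUnion B, fun r hr Z x hx hxr => ?_⟩
  obtain ⟨β, hβ, hxβ⟩ := hB r Z x hx hxr
  exact ⟨β, Finset.mem_biUnion.mpr ⟨r, hr, hβ⟩, hxβ⟩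

lemma exists_finset_mem_bdry_of_mem_mul (hS : Subgroup.closure (S : Set G) = ⊤)
    {M : Subgroup G} (hM : M.FG) (E : Finset G) :
    ∃ B : Finset G, ∀ (Z : Set G) (a x₁ x₂ : G), x₁ ∈ (M : Set G) * E → x₂ ∈ (M : Set G) * E →
      a * x₁ ∈ Z → a * x₂ ∉ Z → ∃ y ∈ (M : Set G) * E * B, a * y ∈ bdry S Z := by
  classical
  obtain ⟨T, rfl⟩ := hM
  obtain ⟨B, hB⟩ := exists_finset_forall_mem_inter_bdry hS (E⁻¹ * insert 1 (T ∪ T⁻¹) * E)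
  refine ⟨B, fun Z a x₁ x₂ hx₁ hx₂ hax₁ hax₂ => ?_⟩
  have step : ∀ b ∈ Subgroup.closure (T : Set G), ∀ t ∈ insert 1 (T ∪ T⁻¹), ∀ e ∈ E, ∀ e' ∈ E,
      a * b * e ∈ Z → a * b * t * e' ∉ Z →
        ∃ y ∈ (Subgroup.closure (T : Set G) : Set G) * E * B, a * y ∈ bdry S Z := by
    intro b hb t ht e he e' he' hin hout
    obtain ⟨β, hβ, hbβ⟩ := hB (e⁻¹ * t * e')
      (Finset.mul_mem_mul (Finset.mul_mem_mul (Finset.inv_mem_inv he) ht) he') Z _ hin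
      (by simpa [mul_assoc] using hout)
    exact ⟨b * e * β, Set.mul_mem_mul (Set.mul_mem_mul hb he) hβ,
      by simpa [mul_assoc] using hbβ.2⟩
  have walk : ∀ m ∈ Subgroup.closure (T : Set G), ∀ b ∈ Subgroup.closure (T : Set G),
      ∀ e ∈ E, ∀ e' ∈ E, a * b * e ∈ Z → a * b * m * e' ∉ Z →
        ∃ y ∈ (Subgroup.closure (T : Set G) : Set G) * E * B, a * y ∈ bdry S Z := by
    intro m hm
    induction hm using Subgroup.closure_induction'' with
    | mem t ht => exact fun b hb => step b hb t (by simp [Finset.mem_coe.mp ht])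
    | inv_mem t ht => exact fun b hb => step b hb t⁻¹ (by simp [Finset.mem_coe.mp ht])
    | one => exact fun b hb => step b hb 1 (Finset.mem_insert_self _ _)
    | mul m₁ m₂ hm₁ _ ih₁ ih₂ =>
      intro b hb e he e' he' hin hout
      by_cases hmid : a * (b * m₁) * e ∈ Z
      · exact ih₂ (b * m₁) (mul_mem hb hm₁) e he e' he' hmid (by simpa [mul_assoc] using hout)
      · exact ih₁ b hb e he e he hin (by simpa [mul_assoc] using hmid)
  obtain ⟨k₁, hk₁, e₁, he₁, rfl⟩ := hx₁
  obtain ⟨k₂, hk₂, e₂, he₂, rfl⟩ := hx₂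
  exact walk (k₁⁻¹ * k₂) (mul_mem (inv_mem hk₁) hk₂) k₁ hk₁ e₁ he₁ e₂ he₂
    (by simpa [mul_assoc] using hax₁) (by simpa [mul_assoc] using hax₂)

lemma inter_bdry_nonempty (hS : Subgroup.closure (S : Set G) = ⊤) {Z : Set G}
    (hZ : Z.Nonempty) (hZc : Zᶜ.Nonempty) : (Z ∩ bdry S Z).Nonempty := by
  obtain ⟨x, hx⟩ := hZ
  obtain ⟨y, hy⟩ := hZc
  obtain ⟨B, hB⟩ := exists_finset_mem_inter_bdry hS (x⁻¹ * y)
  obtain ⟨β, -, hxβ⟩ := hB Z x hx (by simpa using hy)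
  exact ⟨_, hxβ⟩

lemma bdry_inter_nonempty_of_disjoint (hS : Subgroup.closure (S : Set G) = ⊤) {U W : Set G}
    (hUW : (U ∩ W).Nonempty) (hU : Uᶜ.Nonempty) (hW : Disjoint (bdry S W) U) :
    (bdry S U ∩ W).Nonempty := by
  obtain ⟨c, ⟨hcU, hcW⟩, s, hs, hcs⟩ :=
    inter_bdry_nonempty hS hUW (hU.mono (Set.compl_subset_compl.mpr Set.inter_subset_left))
  have hcsW : c * s ∈ W := by
    by_contra hcsW
    exact hW.notMem_of_mem_right hcU ⟨s, hs, by simp [hcW, hcsW]⟩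
  exact ⟨c, ⟨s, hs, by simp_all⟩, hcW⟩

lemma bdry_inter_nonempty_of_not_nested (hS : Subgroup.closure (S : Set G) = ⊤) {U V : Set G}
    (h : ¬ Nested U V) :
    ((bdry S V ∩ U).Nonempty ∧ (bdry S V ∩ Uᶜ).Nonempty) ∨
      ((bdry S U ∩ V).Nonempty ∧ (bdry S U ∩ Vᶜ).Nonempty) := by
  simp only [Nested, not_or, ← Set.nonempty_iff_ne_empty] at h
  obtain ⟨h₁₁, h₁₀, h₀₁, h₀₀⟩ := h
  by_cases hin : (bdry S V ∩ U).Nonempty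
  · by_cases hout : (bdry S V ∩ Uᶜ).Nonempty
    · exact Or.inl ⟨hin, hout⟩
    · have hd : Disjoint (bdry S V) Uᶜ :=
        Set.disjoint_iff_inter_eq_empty.mpr (Set.not_nonempty_iff_eq_empty.mp hout)
      have hd' : Disjoint (bdry S Vᶜ) Uᶜ := by rwa [bdry_compl]
      have hU : Uᶜᶜ.Nonempty := by simpa using h₁₁.mono Set.inter_subset_left
      rw [← bdry_compl S U]
      exact Or.inr ⟨bdry_inter_nonempty_of_disjoint hS h₀₁ hU hd,
        bdry_inter_nonempty_of_disjoint hS h₀₀ hU hd'⟩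
  · have hd : Disjoint (bdry S V) U :=
      Set.disjoint_iff_inter_eq_empty.mpr (Set.not_nonempty_iff_eq_empty.mp hin)
    have hd' : Disjoint (bdry S Vᶜ) U := by rwa [bdry_compl]
    have hU : Uᶜ.Nonempty := h₀₁.mono Set.inter_subset_left
    exact Or.inr ⟨bdry_inter_nonempty_of_disjoint hS h₁₁ hU hd,
      bdry_inter_nonempty_of_disjoint hS h₁₀ hU hd'⟩

end

/-- `{g ∈ G : gX and Y are not nested}` consists of finitely many double
cosets `KgH`. -/
theorem stmt3 {G : Type*} [Group G] (hGfg : Group.FG G)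
    (H K : Subgroup G) (hH : H.FG) (hK : K.FG)
    (X Y : Set G) (hX : NontrivialAI H X) (hY : NontrivialAI K Y) :
    ∃ F : Finset G, ∀ g : G, ¬ Nested (leftTr g X) Y →
      ∃ k ∈ K, ∃ f ∈ F, ∃ h ∈ H, g = k * f * h := by
  classical
  obtain ⟨S, hS⟩ := hGfg.out
  obtain ⟨D, hD⟩ := hFinite_iff_subset_mul.mp (hX.1.hFinite_bdry S)
  obtain ⟨E, hE⟩ := hFinite_iff_subset_mul.mp (hY.1.hFinite_bdry S)
  obtain ⟨BK, hBK⟩ := exists_finset_mem_bdry_of_mem_mul hS hK E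
  obtain ⟨BH, hBH⟩ := exists_finset_mem_bdry_of_mem_mul hS hH D
  refine ⟨E * BK * D⁻¹ ∪ E * BH⁻¹ * D⁻¹, fun g hg => ?_⟩
  suffices g ∈ (K : Set G) * ↑(E * BK * D⁻¹ ∪ E * BH⁻¹ * D⁻¹) * H by
    obtain ⟨_, ⟨k, hk, f, hf, rfl⟩, h, hh, rfl⟩ := this
    exact ⟨k, hk, f, hf, h, hh, rfl⟩
  simp only [Finset.coe_union, Finset.coe_mul, Finset.coe_inv, Set.mul_union, Set.union_mul]
  rcases bdry_inter_nonempty_of_not_nested hS hg with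
    ⟨⟨p₁, hp₁, hp₁X⟩, ⟨p₂, hp₂, hp₂X⟩⟩ | ⟨⟨q₁, hq₁, hq₁Y⟩, ⟨q₂, hq₂, hq₂Y⟩⟩
  · obtain ⟨y, hy, hgy⟩ := hBK (leftTr g X) 1 p₁ p₂ (hE hp₁) (hE hp₂) (by simpa) (by simpa)
    rw [one_mul, bdry_leftTr, mem_leftTr] at hgy
    have hmem : g ∈ (K : Set G) * E * BK * ((H : Set G) * D)⁻¹ := by
      simpa using Set.mul_mem_mul hy (Set.inv_mem_inv.mpr (hD hgy))
    left
    simpa only [mul_inv_rev, inv_coe_set, mul_assoc] using hmem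
  · rw [bdry_leftTr] at hq₁ hq₂
    obtain ⟨x₁, hx₁, rfl⟩ := hq₁
    obtain ⟨x₂, hx₂, rfl⟩ := hq₂
    obtain ⟨y, hy, hgy⟩ := hBH Y g x₁ x₂ (hD hx₁) (hD hx₂) hq₁Y hq₂Y
    have hmem : g ∈ (K : Set G) * E * ((H : Set G) * D * BH)⁻¹ := by
      simpa using Set.mul_mem_mul (hE hgy) (Set.inv_mem_inv.mpr hy)
    right
    simpa only [mul_inv_rev, inv_coe_set, mul_assoc] using hmem
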